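/- arXiv:2007.13565 — 5 statements merged into one kernel-verified Lean document; each statement's English description precedes it below -/
import Mathlib

section
/- There exists a finite contractible poset X (so that the Euler characteristic of its order complex is 1) whose graded Euler–Poincaré characteristic χ_g(X) differs from 1; in particular, χ_g is not a weak homotopy invariant of finite posets. -/
/-- The Alexandrov (lower-set) topology associated to a poset. -/
def lowerTopology (X : Type) [Preorder X] : TopologicalSpace X where
  IsOpen U := IsLowerSet U
  isOpen_univ := isLowerSet_univ
  isOpen_inter _ _ := IsLowerSet.inter
  isOpen_sUnion _ h := isLowerSet_sUnion h

/-- The graded Euler–Poincaré characteristic of a finite poset: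
`χ_g(X) = Σ_p (-1)^p ⬝ #{x : deg x = p} = Σ_x (-1)^{deg x}`, where the degree of an
element is its height (the maximal length of a chain in `U_x = {y : y ≤ x}`). -/
noncomputable def gradedEulerChar (X : Type) [Fintype X] [PartialOrder X] : ℤ :=
  ∑ x : X, (-1 : ℤ) ^ (Order.height x).toNat

section aux

variable (X : Type) [Preorder X] [OrderTop X]

/-- A poset with a top element is contractible in the lower topology. -/
lemma lowerTopology_contractible :
    @ContractibleSpace X (lowerTopology X) := by
  letI : TopologicalSpace X := lowerTopology X
  rw [contractible_iff_id_nullhomotopic]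
  refine ⟨(⊤ : X), ⟨?_⟩⟩
  have hcont : Continuous (fun p : unitInterval × X =>
      if p.1 = 1 then (⊤ : X) else p.2) := by
    rw [continuous_def]
    intro U hU
    have hU' : IsLowerSet U := hU
    by_cases htop : (⊤ : X) ∈ U
    · have hUuniv : U = Set.univ := Set.eq_univ_of_forall fun x => hU' le_top htop
      subst hUuniv
      have he : (fun p : unitInterval × X =>
          if p.1 = 1 then (⊤ : X) else p.2) ⁻¹' Set.univ = Set.univ := by
        simp
      rw [he]; exact isOpen_univ
    · have he : (fun p : unitInterval × X =>
          if p.1 = 1 then (⊤ : X) else p.2) ⁻¹' U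
          = ({(1 : unitInterval)}ᶜ : Set unitInterval) ×ˢ U := by
        ext ⟨t, x⟩
        simp only [Set.mem_preimage, Set.mem_prod, Set.mem_compl_iff,
          Set.mem_singleton_iff]
        by_cases ht : t = 1 <;> simp [ht, htop]
      rw [he]
      exact (isOpen_compl_singleton).prod (hU : IsOpen U)
  exact {
    toContinuousMap := ⟨fun p => if p.1 = 1 then (⊤ : X) else p.2, hcont⟩
    map_zero_left := fun x => by
      simp [show (0 : unitInterval) ≠ 1 by
        intro h
        have := congrArg (Subtype.val) h
        norm_num at this]
    map_one_left := fun x => by simp }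

end aux

lemma height_one_fin_two : Order.height (1 : Fin 2) = 1 := by
  apply le_antisymm
  · rw [show (1 : ℕ∞) = ((1 : ℕ) : ℕ∞) by rfl, Order.height_le_coe_iff]
    intro y hy
    have hy0 : y = 0 := by omega
    subst hy0
    have : Order.height (0 : Fin 2) = 0 := by
      rw [Order.height_eq_zero]
      intro b _
      exact Fin.zero_le b
    rw [this]; norm_num
  · rw [ENat.one_le_iff_ne_zero, Ne, Order.height_eq_zero]
    intro h
    exact absurd (h (Fin.zero_le 1)) (by decide)

/-- There exists a finite contractible poset `X` (contractible as a finite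
topological space, so the Euler characteristic of its order complex is 1) whose graded
Euler–Poincaré characteristic differs from 1.  In particular, `χ_g` is not a weak
homotopy invariant of finite posets. -/
theorem stmt_4 :
    ∃ (X : Type) (_ : Fintype X) (_ : PartialOrder X),
      @ContractibleSpace X (lowerTopology X) ∧ gradedEulerChar X ≠ 1 := by
  refine ⟨Fin 2, inferInstance, inferInstance, lowerTopology_contractible (Fin 2), ?_⟩
  have h0 : Order.height (0 : Fin 2) = 0 := by
    rw [Order.height_eq_zero]; intro b _; exact Fin.zero_le b
  have h1 := height_one_fin_two
  have : gradedEulerChar (Fin 2) = 0 := by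
    rw [gradedEulerChar, Fin.sum_univ_two, h0, h1]
    norm_num
  rw [this]; norm_num
end

section
/- Let M be a matching on a finite poset X. The relation on the chain recurrent set R defined by: x ~ x for all x, and for x ≠ y, x ~ y iff there is an M-cycle containing both x and y, is an equivalence relation on R. -/
/-- A matching on a poset `X`: a set of pairs `(x, y)` with `y` covering `x`,
such that each element of `X` belongs to at most one pair. -/
def IsMatching {X : Type} [PartialOrder X] (M : Set (X × X)) : Prop :=
  (∀ p ∈ M, p.1 ⋖ p.2) ∧
  (∀ p ∈ M, ∀ q ∈ M, ∀ z : X,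
    (z = p.1 ∨ z = p.2) → (z = q.1 ∨ z = q.2) → p = q)

/-- An element is critical for the matching `M` if it belongs to no pair of `M`. -/
def IsCritical {X : Type} [PartialOrder X] (M : Set (X × X)) (z : X) : Prop :=
  ∀ p ∈ M, z ≠ p.1 ∧ z ≠ p.2

/-- `S` is (the set of elements of) an `M`-cycle of index `p`: a closed sequence
`x_0 ≺ y_0 ≻ x_1 ≺ y_1 ≻ ⋯ ≺ y_{r-1} ≻ x_r = x_0` with `deg x_i = p`,
`deg y_i = p + 1` (degrees taken as heights), `(x_i, y_i) ∈ M` and `x_i ≠ x_{i+1}`. -/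
def IsMCycle {X : Type} [PartialOrder X] (M : Set (X × X)) (p : ℕ) (S : Set X) : Prop :=
  ∃ (r : ℕ) (x y : ℕ → X), 1 ≤ r ∧ x 0 = x r ∧
    (∀ i < r, (x i, y i) ∈ M ∧ x (i + 1) ⋖ y i ∧ x i ≠ x (i + 1) ∧
      Order.height (x i) = (p : ℕ∞) ∧ Order.height (y i) = ((p : ℕ∞) + 1)) ∧
    S = {z : X | ∃ i < r, z = x i ∨ z = y i}

/-- The chain recurrent set of a matching `M`: critical elements together with
elements lying on some `M`-cycle. -/
def chainRecurrentSet {X : Type} [PartialOrder X] (M : Set (X × X)) : Set X :=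
  {z : X | IsCritical M z ∨ ∃ (p : ℕ) (S : Set X), IsMCycle M p S ∧ z ∈ S}

/-- The relation on `X` generated by `M`-cycles: `a ~ b` iff `a = b`, or some
`M`-cycle contains both `a` and `b`. -/
def MRel {X : Type} [PartialOrder X] (M : Set (X × X)) (a b : X) : Prop :=
  a = b ∨ ∃ (p : ℕ) (S : Set X), IsMCycle M p S ∧ a ∈ S ∧ b ∈ S

/-- A finite poset is graded when covering relations raise the height by exactly one,
i.e. all maximal chains in each `U_x` have the same length. -/
def IsGraded (X : Type) [PartialOrder X] : Prop :=
  ∀ x y : X, x ⋖ y → Order.height y = Order.height x + 1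

section Aux

variable {X : Type} [PartialOrder X] (M : Set (X × X))

/-- Cycle data: the core conditions of `IsMCycle` without the set. -/
def CycData (p r : ℕ) (x y : ℕ → X) : Prop :=
  1 ≤ r ∧ x 0 = x r ∧
    ∀ i < r, (x i, y i) ∈ M ∧ x (i + 1) ⋖ y i ∧ x i ≠ x (i + 1) ∧
      Order.height (x i) = (p : ℕ∞) ∧ Order.height (y i) = ((p : ℕ∞) + 1)

lemma rotateCyc {p r : ℕ} {x y : ℕ → X} (h : CycData M p r x y) {i : ℕ} (hi : i < r) :
    ∃ x' y' : ℕ → X, CycData M p r x' y' ∧ x' 0 = x i ∧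
      {z : X | ∃ k < r, z = x' k ∨ z = y' k} = {z : X | ∃ k < r, z = x k ∨ z = y k} := by
  obtain ⟨hr, h0, hc⟩ := h
  set f : ℕ → ℕ := fun k => if i + k < r then i + k else i + k - r with hf
  have hfk : ∀ k < r, f k < r := by
    intro k hk; simp only [hf]; split <;> omega
  have hf0 : f 0 = i := by simp only [hf]; split <;> omega
  have hfr : f r = i := by simp only [hf]; split <;> omega
  refine ⟨fun k => x (f k), fun k => y (f k), ⟨hr, by beta_reduce; rw [hf0, hfr], ?_⟩,
    by beta_reduce; rw [hf0], ?_⟩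
  · intro k hk
    beta_reduce
    obtain ⟨h1, h2, h3, h4, h5⟩ := hc (f k) (hfk k hk)
    have hstep : f (k + 1) = f k + 1 ∨ (f (k + 1) = 0 ∧ f k + 1 = r) := by
      simp only [hf]; split <;> split <;> omega
    rcases hstep with he | ⟨he0, her⟩
    · exact ⟨h1, by rw [he]; exact h2, by rw [he]; exact h3, h4, h5⟩
    · refine ⟨h1, ?_, ?_, h4, h5⟩
      · rw [he0, h0, ← her]; exact h2
      · rw [he0, h0, ← her]; exact h3
  · ext z
    simp only [Set.mem_setOf_eq]
    constructor
    · rintro ⟨k, hk, hz⟩; exact ⟨f k, hfk k hk, hz⟩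
    · rintro ⟨j, hj, hz⟩
      rcases le_or_gt i j with h' | h'
      · refine ⟨j - i, by omega, ?_⟩
        have : f (j - i) = j := by simp only [hf]; split <;> omega
        rw [this]; exact hz
      · refine ⟨j + r - i, by omega, ?_⟩
        have : f (j + r - i) = j := by simp only [hf]; split <;> omega
        rw [this]; exact hz

lemma concatCyc {p r1 r2 : ℕ} {x1 y1 x2 y2 : ℕ → X} (h1 : CycData M p r1 x1 y1)
    (h2 : CycData M p r2 x2 y2) (heq : x1 0 = x2 0) :
    ∃ x y : ℕ → X, CycData M p (r1 + r2) x y ∧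
      {z : X | ∃ k < r1 + r2, z = x k ∨ z = y k}
        = {z : X | ∃ k < r1, z = x1 k ∨ z = y1 k} ∪ {z : X | ∃ k < r2, z = x2 k ∨ z = y2 k} := by
  obtain ⟨hr1, h10, hc1⟩ := h1
  obtain ⟨hr2, h20, hc2⟩ := h2
  refine ⟨fun k => if k < r1 then x1 k else x2 (k - r1),
    fun k => if k < r1 then y1 k else y2 (k - r1), ⟨by omega, ?_, ?_⟩, ?_⟩
  · beta_reduce
    rw [if_pos (show 0 < r1 from hr1), if_neg (show ¬ r1 + r2 < r1 by omega)]
    rw [show r1 + r2 - r1 = r2 from by omega, ← h20, heq]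
  · intro k hk
    beta_reduce
    by_cases hk1 : k < r1
    · obtain ⟨h1, h2, h3, h4, h5⟩ := hc1 k hk1
      simp only [if_pos hk1]
      by_cases hk2 : k + 1 < r1
      · simp only [if_pos hk2]; exact ⟨h1, h2, h3, h4, h5⟩
      · have hk3 : k + 1 = r1 := by omega
        simp only [if_neg (show ¬ k + 1 < r1 by omega)]
        rw [show k + 1 - r1 = 0 from by omega, ← heq, h10, ← hk3]
        exact ⟨h1, h2, h3, h4, h5⟩
    · have hj : k - r1 < r2 := by omega
      obtain ⟨h1, h2, h3, h4, h5⟩ := hc2 (k - r1) hj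
      simp only [if_neg hk1, if_neg (show ¬ k + 1 < r1 by omega)]
      rw [show k + 1 - r1 = (k - r1) + 1 from by omega]
      exact ⟨h1, h2, h3, h4, h5⟩
  · ext z
    simp only [Set.mem_setOf_eq, Set.mem_union]
    constructor
    · rintro ⟨k, hk, hz⟩
      by_cases hk1 : k < r1
      · left; refine ⟨k, hk1, ?_⟩; simpa only [if_pos hk1] using hz
      · right; refine ⟨k - r1, by omega, ?_⟩; simpa only [if_neg hk1] using hz
    · rintro (⟨k, hk, hz⟩ | ⟨k, hk, hz⟩)
      · refine ⟨k, by omega, ?_⟩; simp only [if_pos hk]; exact hz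
      · refine ⟨k + r1, by omega, ?_⟩
        simp only [if_neg (show ¬ k + r1 < r1 by omega)]
        rw [show k + r1 - r1 = k from by omega]; exact hz

end Aux

/-- Let `M` be a matching on a finite poset `X`.  The relation on the
chain recurrent set `R` defined by `x ~ x` for all `x`, and for `x ≠ y`, `x ~ y` iff
there is an `M`-cycle containing both `x` and `y`, is an equivalence relation on `R`. -/
theorem stmt_6 (X : Type) [Fintype X] [PartialOrder X] (M : Set (X × X))
    (hM : IsMatching M) :
    Equivalence (fun a b : chainRecurrentSet M => MRel M a.1 b.1) := by
  constructor
  · intro a; exact Or.inl rfl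
  · rintro a b (h | ⟨p, S, hS, ha, hb⟩)
    · exact Or.inl h.symm
    · exact Or.inr ⟨p, S, hS, hb, ha⟩
  · rintro a b c hab hbc
    rcases hab with h | ⟨p1, S1, hS1, ha, hb1⟩
    · rw [h]; exact hbc
    rcases hbc with h | ⟨p2, S2, hS2, hb2, hc⟩
    · exact Or.inr ⟨p1, S1, hS1, ha, h ▸ hb1⟩
    -- extract cycle data
    obtain ⟨r1, x1, y1, hr1, h10, hc1, hSeq1⟩ := hS1
    obtain ⟨r2, x2, y2, hr2, h20, hc2, hSeq2⟩ := hS2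
    have hd1 : CycData M p1 r1 x1 y1 := ⟨hr1, h10, hc1⟩
    have hd2 : CycData M p2 r2 x2 y2 := ⟨hr2, h20, hc2⟩
    rw [hSeq1] at hb1
    rw [hSeq2] at hb2
    obtain ⟨i, hi, hbi⟩ := hb1
    obtain ⟨j, hj, hbj⟩ := hb2
    -- find a common `x`-element
    have key : x1 i = x2 j := by
      rcases hbi with hbi | hbi <;> rcases hbj with hbj | hbj
      · rw [← hbi, ← hbj]
      · -- b = x1 i and b = y2 j : impossible
        exfalso
        have hp := (hc2 j hj).1
        have hq := (hc1 i hi).1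
        have := hM.2 _ hp _ hq (b : X) (Or.inr hbj) (Or.inl hbi)
        have hx : x2 j = x1 i := congrArg Prod.fst this
        have hcov := hM.1 _ hp
        exact hcov.lt.ne (by rw [hx, ← hbi, ← hbj])
      · exfalso
        have hp := (hc1 i hi).1
        have hq := (hc2 j hj).1
        have := hM.2 _ hp _ hq (b : X) (Or.inr hbi) (Or.inl hbj)
        have hx : x1 i = x2 j := congrArg Prod.fst this
        have hcov := hM.1 _ hp
        exact hcov.lt.ne (by rw [hx, ← hbj, ← hbi])
      · have hp := (hc1 i hi).1
        have hq := (hc2 j hj).1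
        have := hM.2 _ hp _ hq (b : X) (Or.inr hbi) (Or.inr hbj)
        exact congrArg Prod.fst this
    have hpp : p1 = p2 := by
      have h1 := (hc1 i hi).2.2.2.1
      have h2 := (hc2 j hj).2.2.2.1
      rw [key, h2] at h1
      exact_mod_cast h1.symm
    subst hpp
    obtain ⟨x1', y1', hd1', hx10, hset1⟩ := rotateCyc M hd1 hi
    obtain ⟨x2', y2', hd2', hx20, hset2⟩ := rotateCyc M hd2 hj
    have heq : x1' 0 = x2' 0 := by rw [hx10, hx20, key]
    obtain ⟨x', y', hd', hset⟩ := concatCyc M hd1' hd2' heq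
    refine Or.inr ⟨p1, S1 ∪ S2, ⟨r1 + r2, x', y', hd'.1, hd'.2.1, hd'.2.2, ?_⟩,
      Or.inl ha, Or.inr hc⟩
    rw [hset, hset1, hset2, hSeq1, hSeq2]
end

section
/- Let X be a finite graded poset and M a matching on X. Then there exists a function f : X → ℝ (a Morse–Bott/Lyapunov function integrating M) such that: (1) if x of degree p is not in the chain recurrent set R and y ≻ x has degree p+1, then f(x) < f(y) when (x,y) ∉ M and f(x) ≥ f(y) when (x,y) ∈ M; (2) if x ∈ R and y ≻ x has degree p+1, then f(x) = f(y) when x ~ y (x and y lie on a common M-cycle) and f(x) < f(y) when x ≁ y. -/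
set_option linter.unusedSectionVars false
set_option maxHeartbeats 1000000

section MorseAux

variable {X : Type} [Fintype X] [PartialOrder X]

def MStep (M : Set (X × X)) (a b : X) : Prop := (a, b) ∈ M ∨ (b ⋖ a ∧ (b, a) ∉ M)

lemma aux_height_ne_top (z : X) : Order.height z ≠ ⊤ := by
  intro h
  obtain ⟨q, -, hlen⟩ := Order.height_eq_top_iff.mp h (Fintype.card X)
  have := q.length_lt_card
  omega

lemma aux_exists_walk {r : X → X → Prop} {b a : X} (h : Relation.ReflTransGen r b a) :
    ∃ (n : ℕ) (g : ℕ → X), g 0 = b ∧ g n = a ∧ ∀ k < n, r (g k) (g (k + 1)) := by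
  induction h with
  | refl => exact ⟨0, fun _ => b, rfl, rfl, by omega⟩
  | @tail c d hbc hcd ih =>
    obtain ⟨n, g, hg0, hgn, hgs⟩ := ih
    refine ⟨n + 1, fun k => if k ≤ n then g k else d, by simp [hg0], by simp, ?_⟩
    intro k hk
    rcases Nat.lt_or_ge k n with h' | h'
    · simp only [show k ≤ n from h'.le, if_true, show k + 1 ≤ n from h', if_true]
      exact hgs k h'
    · have hk' : k = n := by omega
      subst hk'
      simp only [le_refl, if_true, Nat.add_one_le_iff, lt_irrefl, if_false]
      exact hgn ▸ hcd

lemma aux_step_cycle (hX : IsGraded X) {M : Set (X × X)} (hM : IsMatching M) {a b : X}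
    (hab : MStep M a b) (hba : Relation.ReflTransGen (MStep M) b a) :
    ∃ (p : ℕ) (S : Set X), IsMCycle M p S ∧ a ∈ S ∧ b ∈ S := by
  -- a ≠ b
  have hne : a ≠ b := by
    rintro rfl
    rcases hab with h | ⟨h, -⟩
    · exact absurd (hM.1 _ h).lt (lt_irrefl a)
    · exact absurd h.lt (lt_irrefl a)
  obtain ⟨n, g, hg0, hgn, hgs⟩ := aux_exists_walk hba
  -- the closed walk w : a, b, ..., a of length m
  set m := n + 1 with hm_def
  set w : ℕ → X := fun k => if k = 0 then a else g (k - 1) with hw_def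
  have hw0 : w 0 = a := rfl
  have hw1 : w 1 = b := by simp [hw_def, hg0]
  have hwm : w m = a := by simp [hw_def, hm_def, hgn]
  have hws : ∀ k < m, MStep M (w k) (w (k + 1)) := by
    intro k hk
    rcases Nat.eq_zero_or_pos k with rfl | hkpos
    · rw [hw0, hw1]; exact hab
    · have h1 : w k = g (k - 1) := by simp [hw_def, Nat.pos_iff_ne_zero.mp hkpos]
      have h2 : w (k + 1) = g k := by simp [hw_def]
      rw [h1, h2]
      have : k - 1 < n := by omega
      have := hgs (k - 1) this
      rwa [Nat.sub_add_cancel hkpos] at this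
  have hm2 : 2 ≤ m := by
    by_contra h
    have : n = 0 := by omega
    subst this
    exact hne (hg0 ▸ hgn.symm)
  have hm : 0 < m := by omega
  -- periodic walk
  set P : ℕ → X := fun k => w (k % m) with hP_def
  have hPs : ∀ k, MStep M (P k) (P (k + 1)) := by
    intro k
    have h1 : k % m < m := Nat.mod_lt _ hm
    have h2 : (k + 1) % m = (k % m + 1) % m := by
      conv_lhs => rw [Nat.add_mod]
      rw [Nat.mod_eq_of_lt (show 1 < m from hm2)]
    rcases Nat.lt_or_ge (k % m + 1) m with h3 | h3
    · have : (k + 1) % m = k % m + 1 := by rw [h2, Nat.mod_eq_of_lt h3]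
      show MStep M (w (k % m)) (w ((k + 1) % m))
      rw [this]
      exact hws _ h1
    · have h4 : k % m + 1 = m := by omega
      have : (k + 1) % m = 0 := by rw [h2, h4, Nat.mod_self]
      show MStep M (w (k % m)) (w ((k + 1) % m))
      rw [this, hw0, ← hwm]
      have := hws _ h1
      rwa [h4] at this
  have hPper : ∀ k, P (k + m) = P k := by
    intro k; show w ((k + m) % m) = w (k % m); rw [Nat.add_mod_right]
  -- minimum height
  obtain ⟨k0, hk0mem, hk0min⟩ := Finset.exists_min_image (Finset.range m)
    (fun k => Order.height (w k)) ⟨0, Finset.mem_range.mpr hm⟩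
  have hk0m : k0 < m := Finset.mem_range.mp hk0mem
  set h0 := Order.height (w k0) with hh0_def
  have h0top : h0 ≠ ⊤ := aux_height_ne_top _
  set Q : ℕ → X := fun k => P (k + k0) with hQ_def
  have hQs : ∀ k, MStep M (Q k) (Q (k + 1)) := by
    intro k
    have := hPs (k + k0)
    simpa [hQ_def, Nat.add_right_comm k k0 1] using this
  have hQmin : ∀ k, h0 ≤ Order.height (Q k) := by
    intro k
    exact hk0min _ (Finset.mem_range.mpr (Nat.mod_lt _ hm))
  have hQ0 : Order.height (Q 0) = h0 := by
    show Order.height (w ((0 + k0) % m)) = h0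
    rw [Nat.zero_add, Nat.mod_eq_of_lt hk0m]
  have hQper : ∀ k, Q (k + m) = Q k := by
    intro k
    show P (k + m + k0) = P (k + k0)
    rw [Nat.add_right_comm, hPper]
  -- the key sublemma
  have key : ∀ j, Order.height (Q j) = h0 →
      (Q j, Q (j + 1)) ∈ M ∧ Order.height (Q (j + 1)) = h0 + 1 ∧
      Q (j + 2) ⋖ Q (j + 1) ∧ (Q (j + 2), Q (j + 1)) ∉ M ∧
      Order.height (Q (j + 2)) = h0 := by
    intro j hj
    rcases hQs j with hup | ⟨hcov, -⟩
    · have cov1 : Q j ⋖ Q (j + 1) := hM.1 _ hup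
      have hh1 : Order.height (Q (j + 1)) = h0 + 1 := by rw [hX _ _ cov1, hj]
      rcases hQs (j + 1) with hup2 | ⟨hcov2, hnm2⟩
      · exfalso
        have := hM.2 _ hup _ hup2 (Q (j + 1)) (Or.inr rfl) (Or.inl rfl)
        have : Q j = Q (j + 1) := congrArg Prod.fst this
        exact absurd (this ▸ cov1.lt) (lt_irrefl _)
      · have hh2 : Order.height (Q (j + 1 + 1)) = h0 := by
          have := hX _ _ hcov2
          rw [hh1] at this
          exact (WithTop.add_right_cancel (by simp : (1 : ℕ∞) ≠ ⊤) this.symm)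
        exact ⟨hup, hh1, by rwa [show j + 2 = j + 1 + 1 from rfl],
          by rwa [show j + 2 = j + 1 + 1 from rfl], by rwa [show j + 2 = j + 1 + 1 from rfl]⟩
    · exfalso
      have := hX _ _ hcov
      rw [hj] at this
      have hle : h0 + 1 ≤ h0 := by
        calc h0 + 1 ≤ Order.height (Q (j + 1)) + 1 := by
              exact add_le_add_left (hQmin (j + 1)) 1
          _ = h0 := this.symm
      exact absurd ((ENat.add_one_le_iff h0top).mp hle) (lt_irrefl _)
  have heven : ∀ i, Order.height (Q (2 * i)) = h0 := by
    intro i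
    induction i with
    | zero => simpa using hQ0
    | succ i ih =>
      have := (key (2 * i) ih).2.2.2.2
      rwa [show 2 * (i + 1) = 2 * i + 2 by ring]
  -- m is even
  have hQm0 : Q m = Q 0 := by simpa using hQper 0
  obtain ⟨r, hr⟩ : ∃ r, m = 2 * r := by
    rcases Nat.even_or_odd m with ⟨r, hr⟩ | ⟨r, hr⟩
    · exact ⟨r, by omega⟩
    · exfalso
      have h1 : Order.height (Q (2 * r + 1)) = h0 + 1 := (key (2 * r) (heven r)).2.1
      rw [← hr, hQm0, hQ0] at h1
      exact absurd ((ENat.add_one_le_iff h0top).mp h1.symm.le) (lt_irrefl _)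
  have hr1 : 1 ≤ r := by omega
  set xs : ℕ → X := fun i => Q (2 * i) with hxs_def
  set ys : ℕ → X := fun i => Q (2 * i + 1) with hys_def
  set S : Set X := {z : X | ∃ i < r, z = xs i ∨ z = ys i} with hS_def
  have hfacts : ∀ i < r, (xs i, ys i) ∈ M ∧ xs (i + 1) ⋖ ys i ∧ xs i ≠ xs (i + 1) ∧
      Order.height (xs i) = (h0.toNat : ℕ∞) ∧
      Order.height (ys i) = ((h0.toNat : ℕ∞) + 1) := by
    intro i hi
    obtain ⟨hmem, hh1, hcov, hnm, hh2⟩ := key (2 * i) (heven i)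
    have hco : (h0.toNat : ℕ∞) = h0 := ENat.coe_toNat h0top
    have e1 : xs (i + 1) = Q (2 * i + 2) := by
      show Q (2 * (i + 1)) = _; rw [show 2 * (i + 1) = 2 * i + 2 by ring]
    refine ⟨hmem, e1 ▸ hcov, ?_, by rw [hco]; exact heven i, by rw [hco]; exact hh1⟩
    intro heq
    apply hnm
    rw [← e1, ← heq]
    exact hmem
  have hcycle : IsMCycle M h0.toNat S := by
    refine ⟨r, xs, ys, hr1, ?_, hfacts, rfl⟩
    show Q (2 * 0) = Q (2 * r)
    rw [← hr, show 2 * 0 = 0 from rfl, ← hQm0]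
  -- every walk vertex is in S
  have hmemS : ∀ j < m, w j ∈ S := by
    intro j hj
    have hcover : Q ((m - k0 + j) % m) = w j := by
      show w (((m - k0 + j) % m + k0) % m) = w j
      rw [Nat.mod_add_mod, show m - k0 + j + k0 = m + j by omega, Nat.add_mod_left,
        Nat.mod_eq_of_lt hj]
    set k := (m - k0 + j) % m with hk_def
    have hkm : k < m := Nat.mod_lt _ hm
    rcases Nat.even_or_odd k with ⟨i, hi⟩ | ⟨i, hi⟩
    · refine ⟨i, by omega, Or.inl ?_⟩
      rw [← hcover, hxs_def, hi]; ring_nf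
    · refine ⟨i, by omega, Or.inr ?_⟩
      rw [← hcover, hys_def, hi]
  exact ⟨h0.toNat, S, hcycle, hw0 ▸ hmemS 0 hm, hw1 ▸ hmemS 1 hm2⟩

lemma aux_cycle_reach {M : Set (X × X)} (hM : IsMatching M) {p : ℕ} {S : Set X}
    (hS : IsMCycle M p S) {a b : X} (ha : a ∈ S) (hb : b ∈ S) :
    Relation.ReflTransGen (MStep M) a b := by
  obtain ⟨r, x, y, hr, hx0, hf, hSeq⟩ := hS
  have up : ∀ i < r, MStep M (x i) (y i) := fun i hi => Or.inl (hf i hi).1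
  have down : ∀ i < r, MStep M (y i) (x (i + 1)) := by
    intro i hi
    refine Or.inr ⟨(hf i hi).2.1, fun hmem => (hf i hi).2.2.1 ?_⟩
    have := hM.2 _ (hf i hi).1 _ hmem (y i) (Or.inr rfl) (Or.inr rfl)
    exact congrArg Prod.fst this
  have seg : ∀ j ≤ r, ∀ i ≤ j, Relation.ReflTransGen (MStep M) (x i) (x j) := by
    intro j
    induction j with
    | zero => intro _ i hi; interval_cases i; exact Relation.ReflTransGen.refl
    | succ j ih =>
      intro hj i hi
      rcases Nat.eq_or_lt_of_le hi with h | h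
      · subst h; exact Relation.ReflTransGen.refl
      · have hij : i ≤ j := by omega
        have hjr : j < r := by omega
        exact ((ih hjr.le i hij).tail (up j hjr)).tail (down j hjr)
  have anyx : ∀ i ≤ r, ∀ j ≤ r, Relation.ReflTransGen (MStep M) (x i) (x j) := by
    intro i hi j hj
    refine (seg r le_rfl i hi).trans ?_
    rw [← hx0]
    exact seg j hj 0 (Nat.zero_le _)
  rw [hSeq] at ha hb
  obtain ⟨i, hi, ha⟩ := ha
  obtain ⟨j, hj, hb⟩ := hb
  rcases ha with rfl | rfl <;> rcases hb with rfl | rfl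
  · exact anyx i hi.le j hj.le
  · exact (anyx i hi.le j hj.le).tail (up j hj)
  · exact (Relation.ReflTransGen.single (down i hi)).trans (anyx (i + 1) hi j hj.le)
  · exact ((Relation.ReflTransGen.single (down i hi)).trans (anyx (i + 1) hi j hj.le)).tail
      (up j hj)

end MorseAux

/-- Integration of matchings: Let `X` be a finite graded poset and `M` a
matching on `X`.  Then there exists a Morse–Bott (Lyapunov) function `f : X → ℝ`
such that: (1) if `x` is not in the chain recurrent set `R` and `y ≻ x`, then
`f(x) < f(y)` when `(x,y) ∉ M` and `f(x) ≥ f(y)` when `(x,y) ∈ M`; and (2) if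
`x ∈ R` and `y ≻ x`, then `f(x) = f(y)` when `x ~ y` (a common `M`-cycle contains
both) and `f(x) < f(y)` when `x ≁ y`. -/
theorem stmt_7 (X : Type) [Fintype X] [PartialOrder X] (hX : IsGraded X)
    (M : Set (X × X)) (hM : IsMatching M) :
    ∃ f : X → ℝ,
      (∀ x y : X, x ∉ chainRecurrentSet M → x ⋖ y →
        (((x, y) ∉ M → f x < f y) ∧ ((x, y) ∈ M → f y ≤ f x))) ∧
      (∀ x y : X, x ∈ chainRecurrentSet M → x ⋖ y →
        ((MRel M x y → f x = f y) ∧ (¬ MRel M x y → f x < f y))) := by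
  classical
  -- the Lyapunov function: number of elements reachable under the flow
  set f : X → ℝ := fun z =>
    ((Finset.univ.filter (fun u => Relation.ReflTransGen (MStep M) z u)).card : ℝ) with hf_def
  have fsub : ∀ {u v : X}, Relation.ReflTransGen (MStep M) u v →
      (Finset.univ.filter (fun t => Relation.ReflTransGen (MStep M) v t)) ⊆
      (Finset.univ.filter (fun t => Relation.ReflTransGen (MStep M) u t)) := by
    intro u v huv
    intro t ht
    simp only [Finset.mem_filter, Finset.mem_univ, true_and] at *
    exact huv.trans ht
  have fmono : ∀ {u v : X}, Relation.ReflTransGen (MStep M) u v → f v ≤ f u := by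
    intro u v huv
    simp only [hf_def]
    exact_mod_cast Finset.card_le_card (fsub huv)
  have fstrict : ∀ {u v : X}, MStep M u v → ¬ Relation.ReflTransGen (MStep M) v u →
      f v < f u := by
    intro u v hs hnr
    have hsub := fsub (Relation.ReflTransGen.single hs)
    have hss : (Finset.univ.filter (fun t => Relation.ReflTransGen (MStep M) v t)) ⊂
        (Finset.univ.filter (fun t => Relation.ReflTransGen (MStep M) u t)) := by
      refine ⟨hsub, fun hsub' => hnr ?_⟩
      have : u ∈ Finset.univ.filter (fun t => Relation.ReflTransGen (MStep M) u t) := by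
        simp [Relation.ReflTransGen.refl]
      have := hsub' this
      simpa using this
    simp only [hf_def]
    exact_mod_cast Finset.card_lt_card hss
  have feq : ∀ {u v : X}, Relation.ReflTransGen (MStep M) u v →
      Relation.ReflTransGen (MStep M) v u → f u = f v := by
    intro u v h1 h2
    exact le_antisymm (fmono h2) (fmono h1)
  -- membership in R from a cycle
  have memR : ∀ {z : X} {p : ℕ} {S : Set X}, IsMCycle M p S → z ∈ S →
      z ∈ chainRecurrentSet M := fun hc hz => Or.inr ⟨_, _, hc, hz⟩
  -- if x ∈ R and (x,y) ∈ M with x ⋖ y then MRel M x y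
  have matchedRel : ∀ {x y : X}, x ∈ chainRecurrentSet M → (x, y) ∈ M → MRel M x y := by
    intro x y hxR hmem
    rcases hxR with hcrit | ⟨p, S, hc, hxS⟩
    · exact absurd rfl (hcrit (x, y) hmem).1
    · right
      refine ⟨p, S, hc, hxS, ?_⟩
      obtain ⟨r, xs, ys, hr, hx0, hfacts, hSeq⟩ := hc
      rw [hSeq] at hxS ⊢
      obtain ⟨i, hi, hx⟩ := hxS
      rcases hx with rfl | rfl
      · have := hM.2 _ (hfacts i hi).1 _ hmem (xs i) (Or.inl rfl) (Or.inl rfl)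
        have hy : ys i = y := congrArg Prod.snd this
        exact ⟨i, hi, Or.inr hy.symm⟩
      · exfalso
        have := hM.2 _ (hfacts i hi).1 _ hmem (ys i) (Or.inr rfl) (Or.inl rfl)
        have hxy : xs i = ys i := congrArg Prod.fst this
        exact absurd (hxy ▸ (hM.1 _ (hfacts i hi).1).lt) (lt_irrefl _)
  refine ⟨f, ?_, ?_⟩
  · -- x not chain recurrent
    intro x y hxR hcov
    constructor
    · intro hnm
      refine fstrict (Or.inr ⟨hcov, hnm⟩) (fun hr => ?_)
      obtain ⟨p, S, hc, -, hxS⟩ := aux_step_cycle hX hM (Or.inr ⟨hcov, hnm⟩) hr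
      exact hxR (memR hc hxS)
    · intro hmem
      exact fmono (Relation.ReflTransGen.single (Or.inl hmem))
  · -- x chain recurrent
    intro x y hxR hcov
    have hMRcase : MRel M x y → f x = f y := by
      intro hrel
      rcases hrel with rfl | ⟨p, S, hc, hxS, hyS⟩
      · rfl
      · exact feq (aux_cycle_reach hM hc hxS hyS) (aux_cycle_reach hM hc hyS hxS)
    refine ⟨hMRcase, ?_⟩
    intro hnrel
    have hnm : (x, y) ∉ M := fun hmem => hnrel (matchedRel hxR hmem)
    refine fstrict (Or.inr ⟨hcov, hnm⟩) (fun hr => ?_)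
    obtain ⟨p, S, hc, hyS, hxS⟩ := aux_step_cycle hX hM (Or.inr ⟨hcov, hnm⟩) hr
    exact hnrel (Or.inr ⟨p, S, hc, hxS, hyS⟩)
end

section
/- Let (C_*, ∂) be a free chain complex of finitely generated abelian groups, nonzero in only finitely many degrees, and let (B_*, ∂) be a bounded free subcomplex such that the inclusion B_* ↪ C_* is a quasi-isomorphism. If b_k = rank H_k(C_*) and μ_k is the minimum number of generators of the torsion subgroup of H_k(C_*), then rank(B_k) ≥ b_k + μ_k + μ_{k-1} for each k; consequently rank(B_*) = Σ_k rank(B_k) ≥ Σ_k b_k + 2 Σ_k μ_k. -/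
open CategoryTheory

/-- The minimal number of generators of a module. -/
noncomputable def minGenerators (R : Type) [CommRing R] (M : Type)
    [AddCommGroup M] [Module R M] : ℕ :=
  sInf {n : ℕ | ∃ s : Finset M, s.card = n ∧ Submodule.span R (s : Set M) = ⊤}

/-- The minimal number of generators of the torsion submodule of a module. -/
noncomputable def torsionMinGen (R : Type) [CommRing R] (M : Type)
    [AddCommGroup M] [Module R M] : ℕ :=
  minGenerators R (Submodule.torsion R M)

section Transport

variable {M : Type} [AddCommGroup M]

lemma int_module_eq (i1 i2 : Module ℤ M) : i1 = i2 := by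
  haveI := AddCommGroup.uniqueIntModule (M := M)
  exact Subsingleton.elim _ _

lemma finrank_int_congr (i1 i2 : Module ℤ M) :
    @Module.finrank ℤ M _ _ i1 = @Module.finrank ℤ M _ _ i2 := by
  rw [int_module_eq i1 i2]

lemma torsionMinGen_int_congr (i1 i2 : Module ℤ M) :
    @torsionMinGen ℤ _ M _ i1 = @torsionMinGen ℤ _ M _ i2 := by
  rw [int_module_eq i1 i2]

lemma free_int_congr (i1 i2 : Module ℤ M) (h : @Module.Free ℤ M _ _ i1) :
    @Module.Free ℤ M _ _ i2 := by
  rw [int_module_eq i2 i1]; exact h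

lemma finite_int_congr (i1 i2 : Module ℤ M) (h : @Module.Finite ℤ M _ _ i1) :
    @Module.Finite ℤ M _ _ i2 := by
  rw [int_module_eq i2 i1]; exact h

end Transport

section CatHelpers

variable {R : Type} [Ring R] {M N : ModuleCat.{0} R}

/-- kernel of a morphism of `R`-modules, as a submodule (w.r.t. the category instances). -/
def krnl (f : M ⟶ N) : Submodule R M := LinearMap.ker f.hom

/-- range of a morphism of `R`-modules, as a submodule (w.r.t. the category instances). -/
def rnge (f : M ⟶ N) : Submodule R N := LinearMap.range f.hom

/-- finrank of an object of `ModuleCat R` (w.r.t. the category instances). -/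
noncomputable def catrank (M : ModuleCat.{0} R) : ℕ := Module.finrank R M

/-- finrank of a submodule (w.r.t. the category instances). -/
noncomputable def subrank (p : Submodule R M) : ℕ := Module.finrank R p

lemma rnge_eq_bot_of_isZero (hM : Limits.IsZero M) (f : M ⟶ N) : rnge f = ⊥ := by
  ext y
  simp only [Submodule.mem_bot, rnge, LinearMap.mem_range]
  constructor
  · rintro ⟨a, rfl⟩
    have ha : a = 0 := by
      have h0 : (𝟙 M : M ⟶ M) = 0 := hM.eq_of_src _ _
      calc a = (𝟙 M : M ⟶ M).hom a := rfl
        _ = (0 : M ⟶ M).hom a := by rw [h0]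
        _ = 0 := rfl
    rw [ha, map_zero]
  · rintro rfl
    exact ⟨0, map_zero _⟩

lemma subrank_bot [Nontrivial R] : subrank (⊥ : Submodule R M) = 0 := by
  have : Subsingleton (⊥ : Submodule R M) := inferInstance
  exact Module.finrank_zero_of_subsingleton

end CatHelpers

section Aux

open Module

variable (R : Type) [CommRing R] [IsDomain R] [IsPrincipalIdealRing R]

lemma aux_finrank_quot {M : Type} [AddCommGroup M] [Module R M]
    [Module.Finite R M] (N : Submodule R M) :
    finrank R (M ⧸ N) + finrank R N = finrank R M := by
  haveI : IsNoetherian R M := isNoetherian_of_isNoetherianRing_of_finite R M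
  have h := Submodule.rank_quotient_add_rank N
  have h1 : Module.rank R (M ⧸ N) < Cardinal.aleph0 := Module.rank_lt_aleph0 R _
  have h2 : Module.rank R N < Cardinal.aleph0 := Module.rank_lt_aleph0 R _
  rw [Module.finrank, Module.finrank, Module.finrank, ← Cardinal.toNat_add h1 h2, h]

lemma aux_minGen_le_finrank {M H : Type} [AddCommGroup M] [Module R M]
    [AddCommGroup H] [Module R H] [Module.Free R M] [Module.Finite R M]
    (p : M →ₗ[R] H) (hp : Function.Surjective p) :
    minGenerators R H ≤ finrank R M := by
  classical
  set bb := Module.Free.chooseBasis R M with hbb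
  set s : Finset H := Finset.image (fun j => p (bb j)) Finset.univ with hs
  have hspan : Submodule.span R (s : Set H) = ⊤ := by
    have h1 : (s : Set H) = ⇑p '' (Set.range ⇑bb) := by
      rw [hs]
      simp only [Finset.coe_image, Finset.coe_univ, Set.image_univ]
      exact Set.range_comp ⇑p ⇑bb
    rw [h1, Submodule.span_image, bb.span_eq, Submodule.map_top,
      LinearMap.range_eq_top.mpr hp]
  calc minGenerators R H ≤ s.card := Nat.sInf_le ⟨s, rfl, hspan⟩
    _ ≤ Fintype.card (Module.Free.ChooseBasisIndex R M) := by
        simpa using Finset.card_image_le (s := Finset.univ) (f := fun j => p (bb j))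
    _ = finrank R M := (Module.finrank_eq_card_chooseBasisIndex R M).symm

lemma aux_core {M H : Type} [AddCommGroup M] [Module R M]
    [AddCommGroup H] [Module R H] [Module.Free R M] [Module.Finite R M]
    (π : M →ₗ[R] H) (hπ : Function.Surjective π) :
    finrank R H + torsionMinGen R H ≤ finrank R M ∧
    torsionMinGen R H ≤ finrank R (LinearMap.ker π) := by
  haveI : Module.Finite R H := Module.Finite.of_surjective π hπ
  haveI : IsNoetherian R M := isNoetherian_of_isNoetherianRing_of_finite R M
  set T := Submodule.torsion R H with hT
  have hTrank : finrank R T = 0 := by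
    have h0 : Module.rank R T = 0 := by
      rw [rank_eq_zero_iff]
      rintro ⟨x, hx⟩
      obtain ⟨a, ha⟩ := hx
      refine ⟨(a : R), nonZeroDivisors.coe_ne_zero a, ?_⟩
      ext
      simpa [Submonoid.smul_def] using ha
    rw [Module.finrank, h0]
    simp
  set q := T.mkQ.comp π with hq
  have hqsurj : Function.Surjective q := (Submodule.mkQ_surjective T).comp hπ
  set K := LinearMap.ker q with hK
  have h1 : finrank R (M ⧸ K) + finrank R K = finrank R M := aux_finrank_quot R K
  have e1 := q.quotKerEquivOfSurjective hqsurj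
  have h2 : finrank R (M ⧸ K) = finrank R (H ⧸ T) := e1.finrank_eq
  have h3 : finrank R (H ⧸ T) + finrank R T = finrank R H := aux_finrank_quot R T
  have hmem : ∀ x ∈ K, π x ∈ T := by
    intro x hx
    have hx' : T.mkQ (π x) = 0 := hx
    simpa [Submodule.Quotient.mk_eq_zero] using hx'
  set p := π.restrict hmem with hp
  have hpsurj : Function.Surjective p := by
    rintro ⟨t, ht⟩
    obtain ⟨x, hx⟩ := hπ t
    have hxK : x ∈ K := by
      show T.mkQ (π x) = 0
      rw [hx]
      simpa [Submodule.Quotient.mk_eq_zero] using ht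
    exact ⟨⟨x, hxK⟩, Subtype.ext (by simp [hp, LinearMap.restrict_apply, hx])⟩
  have hgen : minGenerators R T ≤ finrank R K := aux_minGen_le_finrank R p hpsurj
  constructor
  · have hH : finrank R H = finrank R (M ⧸ K) := by omega
    have hTg : torsionMinGen R H = minGenerators R T := rfl
    omega
  · have h4 : finrank R (K ⧸ LinearMap.ker p) + finrank R (LinearMap.ker p)
        = finrank R K := aux_finrank_quot R _
    have e2 := p.quotKerEquivOfSurjective hpsurj
    have h5 : finrank R (K ⧸ LinearMap.ker p) = 0 := by rw [e2.finrank_eq, hTrank]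
    have hker : LinearMap.ker p = Submodule.comap K.subtype (LinearMap.ker π) := by
      ext x
      simp [hp, LinearMap.restrict_apply, Subtype.ext_iff]
    have hle : LinearMap.ker π ≤ K := by
      intro x hx
      show T.mkQ (π x) = 0
      rw [LinearMap.mem_ker.mp hx]
      simp
    have h6 : finrank R (LinearMap.ker p) = finrank R (LinearMap.ker π) := by
      rw [hker]
      exact (Submodule.comapSubtypeEquivOfLe hle).finrank_eq
    have hTg : torsionMinGen R H = minGenerators R T := rfl
    omega

lemma aux_bridge (S : ShortComplex (ModuleCat.{0} R)) [S.HasHomology]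
    [Module.Free R S.X₂] [Module.Finite R S.X₂] (H : ModuleCat.{0} R)
    (e : S.homology ≅ H) :
    finrank R H + torsionMinGen R H ≤ subrank (krnl S.g) ∧
    torsionMinGen R H ≤ subrank (rnge S.f) := by
  set Z := LinearMap.ker S.g.hom with hZ
  set Rng := LinearMap.range S.moduleCatToCycles with hRng
  set eq := (S.moduleCatHomologyIso.symm ≪≫ e).toLinearEquiv with heq
  set π := eq.toLinearMap ∘ₗ Rng.mkQ with hπdef
  have hπ : Function.Surjective π := eq.surjective.comp (Submodule.mkQ_surjective Rng)
  obtain ⟨h1, h2⟩ := aux_core R π hπ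
  have hkerπ : LinearMap.ker π = Rng := by
    ext x
    have hx : π x = 0 ↔ Rng.mkQ x = 0 := eq.map_eq_zero_iff
    rw [LinearMap.mem_ker, hx, Submodule.mkQ_apply,
      Submodule.Quotient.mk_eq_zero]
  have hle : LinearMap.range S.f.hom ≤ Z := by
    rintro x ⟨a, rfl⟩
    exact S.moduleCat_zero_apply a
  have hrange : finrank R Rng = finrank R (LinearMap.range S.f.hom) := by
    have hEq : Rng = Submodule.comap Z.subtype (LinearMap.range S.f.hom) := by
      ext ⟨x, hx⟩
      simp [hRng, Subtype.ext_iff, ShortComplex.moduleCatToCycles]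
      exact Iff.rfl
    rw [hEq]
    exact (Submodule.comapSubtypeEquivOfLe hle).finrank_eq
  refine ⟨h1, ?_⟩
  rw [hkerπ, hrange] at h2
  exact h2

lemma aux_rank_split {M N : ModuleCat.{0} R} [Module.Finite R M] (f : M ⟶ N) :
    catrank M = subrank (rnge f) + subrank (krnl f) := by
  have h := aux_finrank_quot R (krnl f)
  have e := LinearMap.quotKerEquivRange f.hom
  rw [catrank, ← h]
  congr 1
  exact e.finrank_eq

end Aux

/-- Let `(C_*, ∂)` be a free chain complex of finitely generated abelian
groups, nonzero in only finitely many degrees, and let `(B_*, ∂)` be a bounded free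
subcomplex (a degreewise monic chain map `i : B ⟶ C`) such that the inclusion is a
quasi-isomorphism.  If `b k = rank H_k(C)` and `μ k` is the minimal number of
generators of the torsion subgroup of `H_k(C)`, then `rank B_k ≥ b_k + μ_k + μ_{k-1}`
for each `k` (with `μ_{-1} = 0`); consequently
`rank B_* = Σ_k rank B_k ≥ Σ_k b_k + 2 Σ_k μ_k`. -/
theorem stmt_12 (C B : ChainComplex (ModuleCat ℤ) ℕ)
    (hCfree : ∀ n : ℕ, Module.Free ℤ (C.X n))
    (hCfg : ∀ n : ℕ, Module.Finite ℤ (C.X n))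
    (hBfree : ∀ n : ℕ, Module.Free ℤ (B.X n))
    (hBfg : ∀ n : ℕ, Module.Finite ℤ (B.X n))
    (i : B ⟶ C) (hmono : ∀ n : ℕ, Mono (i.f n)) (hq : QuasiIso i)
    (b μ : ℕ → ℕ)
    (hb : ∀ k : ℕ, b k = Module.finrank ℤ (C.homology k))
    (hμ : ∀ k : ℕ, μ k = torsionMinGen ℤ (C.homology k)) :
    (b 0 + μ 0 ≤ Module.finrank ℤ (B.X 0)) ∧
    (∀ k : ℕ, b (k + 1) + μ (k + 1) + μ k ≤ Module.finrank ℤ (B.X (k + 1))) ∧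
    (∀ N : ℕ, (∀ n : ℕ, N ≤ n → Limits.IsZero (C.X n) ∧ Limits.IsZero (B.X n)) →
      ∑ k ∈ Finset.range N, b k + 2 * ∑ k ∈ Finset.range N, μ k
        ≤ ∑ k ∈ Finset.range N, Module.finrank ℤ (B.X k)) := by
  haveI := hq
  have main : ∀ (j m : ℕ), ((ComplexShape.down ℕ).next j = m) →
      b j + μ j ≤ subrank (krnl (B.d j m)) ∧
      μ j ≤ subrank (rnge (B.d (j+1) j)) := by
    intro j m hm
    have hi : (ComplexShape.down ℕ).prev j = j + 1 := ChainComplex.prev ℕ j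
    have e : (B.sc' (j+1) j m).homology ≅ C.homology j :=
      (B.homologyIsoSc' (j+1) j m hi hm).symm ≪≫
        asIso (HomologicalComplex.homologyMap i j)
    haveI hf : @Module.Free ℤ ((B.sc' (j+1) j m).X₂) _ _
        ((B.sc' (j+1) j m).X₂).isModule := free_int_congr _ _ (hBfree j)
    haveI hfin : @Module.Finite ℤ ((B.sc' (j+1) j m).X₂) _ _
        ((B.sc' (j+1) j m).X₂).isModule := finite_int_congr _ _ (hBfg j)
    have h := aux_bridge ℤ (B.sc' (j+1) j m) (C.homology j) e
    rw [hb j, hμ j]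
    constructor
    · refine le_trans (le_of_eq ?_) h.1
      congr 1
    · exact le_trans (le_of_eq (torsionMinGen_int_congr _ _)) h.2
  have main2 : ∀ j : ℕ, μ j ≤ subrank (rnge (B.d (j+1) j)) := by
    intro j
    cases j with
    | zero => exact (main 0 0 ChainComplex.next_nat_zero).2
    | succ j' => exact (main (j'+1) j' (ChainComplex.next_nat_succ j')).2
  have conv : ∀ j : ℕ, Module.finrank ℤ (B.X j) = catrank (B.X j) := by
    intro j
    exact finrank_int_congr _ _
  have rn : ∀ (j m : ℕ), catrank (B.X j) =
      subrank (rnge (B.d j m)) + subrank (krnl (B.d j m)) := by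
    intro j m
    haveI : @Module.Finite ℤ (B.X j) _ _ (B.X j).isModule :=
      finite_int_congr _ _ (hBfg j)
    exact aux_rank_split ℤ (B.d j m)
  have h1 : b 0 + μ 0 ≤ Module.finrank ℤ (B.X 0) := by
    have ha := (main 0 0 ChainComplex.next_nat_zero).1
    have h := rn 0 0
    have hc := conv 0
    omega
  have h2 : ∀ k : ℕ, b (k + 1) + μ (k + 1) + μ k ≤ Module.finrank ℤ (B.X (k + 1)) := by
    intro k
    have ha := (main (k+1) k (ChainComplex.next_nat_succ k)).1
    have hbb := main2 k
    have h := rn (k+1) k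
    have hc := conv (k+1)
    omega
  refine ⟨h1, h2, ?_⟩
  intro N hN
  cases N with
  | zero => simp
  | succ m =>
    have hμm : μ m = 0 := by
      have hb2 := main2 m
      have hz : rnge (B.d (m+1) m) = ⊥ :=
        rnge_eq_bot_of_isZero (hN (m+1) (le_refl _)).2 _
      rw [hz, subrank_bot] at hb2
      omega
    have hsB := Finset.sum_range_succ' (fun k => Module.finrank ℤ (B.X k)) m
    have hsb := Finset.sum_range_succ' b m
    have hsμ := Finset.sum_range_succ' μ m
    have hsμ2 := Finset.sum_range_succ μ m
    have hle : ∑ j ∈ Finset.range m, (b (j+1) + μ (j+1) + μ j)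
        ≤ ∑ j ∈ Finset.range m, Module.finrank ℤ (B.X (j+1)) :=
      Finset.sum_le_sum (fun j _ => h2 j)
    rw [Finset.sum_add_distrib, Finset.sum_add_distrib] at hle
    omega
end

section
/- Let H_0, H_1, …, H_n be finitely generated abelian groups with b_k = rank H_k and μ_k the minimal number of generators of the torsion subgroup of H_k. Then there exists a bounded chain complex (L_*, ∂) of free abelian groups with rank(L_k) = b_k + μ_k + μ_{k-1} for every k, whose homology satisfies H_k(L_*) ≅ H_k for all k. -/
open CategoryTheory

open Module LinearMap Submodule in
lemma key (N : Type) [AddCommGroup N] [Module ℤ N] [Module.Finite ℤ N] :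
    ∃ (ψ : ((Fin (Module.finrank ℤ N) → ℤ) × (Fin (torsionMinGen ℤ N) → ℤ)) →ₗ[ℤ] N)
      (j : (Fin (torsionMinGen ℤ N) → ℤ) →ₗ[ℤ] (Fin (torsionMinGen ℤ N) → ℤ)),
      Function.Surjective ψ ∧ Function.Injective j ∧
      LinearMap.ker ψ = Submodule.prod ⊥ (LinearMap.range j) := by
  classical
  haveI : IsNoetherian ℤ N := isNoetherian_of_isNoetherianRing_of_finite ℤ N
  letI : Module ℤ ↥(Submodule.torsion ℤ N) := (Submodule.torsion ℤ N).module
  letI : Module ℤ (N ⧸ Submodule.torsion ℤ N) := Submodule.Quotient.module _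
  haveI finT : Module.Finite ℤ ↥(Submodule.torsion ℤ N) :=
    Module.Finite.iff_fg.mpr (IsNoetherian.noetherian _)
  set μ := torsionMinGen ℤ N with hμdef
  have hne : {n : ℕ | ∃ s : Finset ↥(Submodule.torsion ℤ N),
      s.card = n ∧ span ℤ (s : Set ↥(Submodule.torsion ℤ N)) = ⊤}.Nonempty := by
    obtain ⟨s, hs⟩ := Module.Finite.fg_top (R := ℤ) (M := ↥(Submodule.torsion ℤ N))
    exact ⟨s.card, s, rfl, hs⟩
  have hμeq : μ = sInf {n : ℕ | ∃ s : Finset ↥(Submodule.torsion ℤ N),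
      s.card = n ∧ span ℤ (s : Set ↥(Submodule.torsion ℤ N)) = ⊤} := by
    rw [hμdef]; rfl
  obtain ⟨s, hcard, hspan⟩ : ∃ s : Finset ↥(Submodule.torsion ℤ N),
      s.card = μ ∧ span ℤ (s : Set ↥(Submodule.torsion ℤ N)) = ⊤ := by
    rw [hμeq]; exact Nat.sInf_mem hne
  let g : Fin μ → ↥(Submodule.torsion ℤ N) :=
    fun i => (s.equivFin.symm (Fin.cast hcard.symm i) : ↥(Submodule.torsion ℤ N))
  have hrange : Set.range g = (s : Set ↥(Submodule.torsion ℤ N)) := by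
    ext t
    constructor
    · rintro ⟨i, rfl⟩
      exact (s.equivFin.symm (Fin.cast hcard.symm i)).2
    · intro ht
      exact ⟨Fin.cast hcard (s.equivFin ⟨t, ht⟩), by simp [g]⟩
  let π : (Fin μ → ℤ) →ₗ[ℤ] ↥(Submodule.torsion ℤ N) := Fintype.linearCombination ℤ g
  have hπsurj : Function.Surjective π := by
    rw [← LinearMap.range_eq_top]
    show LinearMap.range (Fintype.linearCombination ℤ g) = ⊤
    rw [Fintype.range_linearCombination, hrange, hspan]
  set K := LinearMap.ker π with hK
  haveI : Module.Finite ℤ ↥K := Module.Finite.iff_fg.mpr (IsNoetherian.noetherian K)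
  have hann : ∃ n : ℤ, n ≠ 0 ∧ ∀ t : ↥(Submodule.torsion ℤ N), n • t = 0 := by
    choose a ha using fun t : ↥(Submodule.torsion ℤ N) =>
      (t.2 : (t : N) ∈ Submodule.torsion ℤ N)
    refine ⟨∏ t ∈ s, (a t : ℤ),
      Finset.prod_ne_zero_iff.mpr fun t _ => nonZeroDivisors.coe_ne_zero (a t), ?_⟩
    intro t
    have htop : t ∈ span ℤ (s : Set ↥(Submodule.torsion ℤ N)) := by
      rw [hspan]; exact Submodule.mem_top
    refine Submodule.span_induction ?_ ?_ ?_ ?_ htop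
    · intro x hx
      obtain ⟨c, hc⟩ := Finset.dvd_prod_of_mem (fun t => (a t : ℤ)) hx
      have ha' := ha x
      have hax : ((a x : ℤ) • x : ↥(Submodule.torsion ℤ N)) = 0 := by
        apply Subtype.ext
        have hcoe := map_zsmul (Submodule.torsion ℤ N).subtype (a x : ℤ) x
        simp only [Submodule.coe_subtype] at hcoe
        rw [hcoe]
        rw [← int_smul_eq_zsmul ‹Module ℤ N›]
        exact ha'
      rw [hc, mul_zsmul', hax, zsmul_zero]
    · exact zsmul_zero _
    · intro x y _ _ hx hy
      rw [zsmul_add, hx, hy, add_zero]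
    · intro c x _ hx
      have := map_zsmul (LinearMap.lsmul ℤ ↥(Submodule.torsion ℤ N) c)
        (∏ t ∈ s, (a t : ℤ)) x
      simp only [LinearMap.lsmul_apply] at this
      rw [← this, hx]
      have h0 := map_zero (LinearMap.lsmul ℤ ↥(Submodule.torsion ℤ N) c)
      simp only [LinearMap.lsmul_apply] at h0
      exact h0
  obtain ⟨n, hn0, hnkill⟩ := hann
  have h1 : finrank ℤ ↥K ≤ μ := by
    have := LinearMap.finrank_le_finrank_of_injective (f := K.subtype) K.injective_subtype
    rwa [Module.finrank_fin_fun] at this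
  have h2 : μ ≤ finrank ℤ ↥K := by
    have hmem : ∀ y : Fin μ → ℤ, n • y ∈ K := by
      intro y
      rw [hK, LinearMap.mem_ker, map_zsmul, hnkill]
    have hinj : Function.Injective fun y : Fin μ → ℤ =>
        (⟨n • y, hmem y⟩ : ↥K) := by
      intro y z hyz
      have h := congrArg Subtype.val hyz
      simp only at h
      funext i
      have hi := congrFun h i
      simp only [Pi.smul_apply, zsmul_eq_mul] at hi
      exact mul_left_cancel₀ hn0 hi
    have hlin : IsLinearMap ℤ fun y : Fin μ → ℤ => (⟨n • y, hmem y⟩ : ↥K) := by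
      constructor
      · intro y z; apply Subtype.ext; simp [zsmul_add]
      · intro c y
        apply Subtype.ext
        show n • c • y = c • n • y
        rw [smul_comm]
    have := LinearMap.finrank_le_finrank_of_injective (f := hlin.mk' _) hinj
    rwa [Module.finrank_fin_fun] at this
  have hrankK : finrank ℤ ↥K = μ := le_antisymm h1 h2
  have hcardK : Fintype.card (Module.Free.ChooseBasisIndex ℤ ↥K) = μ := by
    rw [← Module.finrank_eq_card_chooseBasisIndex, hrankK]
  let φ : (Fin μ → ℤ) ≃ₗ[ℤ] ↥K :=
    ((Module.Free.chooseBasis ℤ ↥K).reindex (Fintype.equivFinOfCardEq hcardK)).equivFun.symm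
  let j : (Fin μ → ℤ) →ₗ[ℤ] (Fin μ → ℤ) := K.subtype ∘ₗ φ.toLinearMap
  have hjinj : Function.Injective j := K.injective_subtype.comp φ.injective
  have hjrange : LinearMap.range j = K := by
    rw [LinearMap.range_comp, LinearEquiv.range, Submodule.map_top, range_subtype]
  -- free part
  haveI : Module.Finite ℤ (N ⧸ Submodule.torsion ℤ N) :=
    Module.Finite.of_surjective (Submodule.torsion ℤ N).mkQ (Submodule.mkQ_surjective _)
  haveI : Module.Free ℤ (N ⧸ Submodule.torsion ℤ N) := Module.free_of_finite_type_torsion_free'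
  have hrankQ : finrank ℤ (N ⧸ Submodule.torsion ℤ N) = finrank ℤ N :=
    congrArg Cardinal.toNat (rank_quotient_eq_of_le_torsion (le_refl _))
  have hcardQ : Fintype.card (Module.Free.ChooseBasisIndex ℤ (N ⧸ Submodule.torsion ℤ N)) =
      finrank ℤ N := by
    rw [← Module.finrank_eq_card_chooseBasisIndex, hrankQ]
  let σ : (Fin (finrank ℤ N) → ℤ) ≃ₗ[ℤ] (N ⧸ Submodule.torsion ℤ N) :=
    ((Module.Free.chooseBasis ℤ (N ⧸ Submodule.torsion ℤ N)).reindex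
      (Fintype.equivFinOfCardEq hcardQ)).equivFun.symm
  obtain ⟨sec, hsec⟩ := Module.projective_lifting_property (Submodule.torsion ℤ N).mkQ
    (LinearMap.id : (N ⧸ Submodule.torsion ℤ N) →ₗ[ℤ] (N ⧸ Submodule.torsion ℤ N))
    (Submodule.mkQ_surjective _)
  have hsec' : ∀ q : N ⧸ Submodule.torsion ℤ N, (Submodule.torsion ℤ N).mkQ (sec q) = q :=
    fun q => congrArg (fun f => f q) (congrArg DFunLike.coe hsec)
  let ψ : ((Fin (finrank ℤ N) → ℤ) × (Fin μ → ℤ)) →ₗ[ℤ] N :=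
    (sec ∘ₗ σ.toLinearMap).coprod ((Submodule.torsion ℤ N).subtype ∘ₗ π)
  have hψapp : ∀ x y, ψ (x, y) = sec (σ x) + ↑(π y) := fun x y => rfl
  refine ⟨ψ, j, ?_, hjinj, ?_⟩
  · intro h
    have hmemT : h - sec ((Submodule.torsion ℤ N).mkQ h) ∈ Submodule.torsion ℤ N := by
      rw [← Submodule.Quotient.mk_eq_zero, ← Submodule.mkQ_apply, map_sub, hsec', sub_self]
    obtain ⟨y, hy⟩ := hπsurj ⟨h - sec ((Submodule.torsion ℤ N).mkQ h), hmemT⟩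
    refine ⟨(σ.symm ((Submodule.torsion ℤ N).mkQ h), y), ?_⟩
    rw [hψapp, σ.apply_symm_apply, hy]
    simp
  · rw [hjrange, hK]
    ext ⟨x, y⟩
    simp only [LinearMap.mem_ker, Submodule.mem_prod, Submodule.mem_bot]
    constructor
    · intro h0
      rw [hψapp] at h0
      have h2 : (Submodule.torsion ℤ N).mkQ ↑(π y) = 0 := by
        rw [Submodule.mkQ_apply, Submodule.Quotient.mk_eq_zero]
        exact (π y).2
      have h1 : σ x = 0 := by
        have h3 := congrArg (Submodule.torsion ℤ N).mkQ h0
        rw [map_add, h2, add_zero, hsec', map_zero] at h3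
        exact h3
      have hx : x = 0 := by
        have h4 := congrArg σ.symm h1
        rwa [σ.symm_apply_apply, map_zero] at h4
      refine ⟨hx, ?_⟩
      rw [hx, map_zero, map_zero, zero_add] at h0
      exact Subtype.ext h0
    · rintro ⟨hx, hy⟩
      rw [hψapp, hx, map_zero, map_zero, zero_add]
      have hy0 : π y = 0 := hy
      rw [hy0]
      rfl

abbrev prMu (μ : ℕ → ℕ) : ℕ → ℕ := fun k => Nat.rec 0 (fun m _ => μ m) k

abbrev ModL (b μ : ℕ → ℕ) (k : ℕ) : Type :=
  (Fin (b k) → ℤ) × (Fin (μ k) → ℤ) × (Fin (prMu μ k) → ℤ)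

def dmapL (b μ : ℕ → ℕ) (j : ∀ k : ℕ, (Fin (μ k) → ℤ) →ₗ[ℤ] (Fin (μ k) → ℤ)) (k : ℕ) :
    ModL b μ (k + 1) →ₗ[ℤ] ModL b μ k :=
  LinearMap.prod 0 (LinearMap.prod
    ((j k).comp ((LinearMap.snd ℤ (Fin (μ (k+1)) → ℤ) (Fin (prMu μ (k+1)) → ℤ)).comp
      (LinearMap.snd ℤ (Fin (b (k+1)) → ℤ) _))) 0)

lemma dmapL_apply (b μ : ℕ → ℕ) (j : ∀ k : ℕ, (Fin (μ k) → ℤ) →ₗ[ℤ] (Fin (μ k) → ℤ)) (k : ℕ)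
    (p : ModL b μ (k + 1)) : dmapL b μ j k p = (0, j k p.2.2, 0) := rfl

noncomputable def LC (b μ : ℕ → ℕ) (j : ∀ k : ℕ, (Fin (μ k) → ℤ) →ₗ[ℤ] (Fin (μ k) → ℤ)) :
    ChainComplex (ModuleCat ℤ) ℕ :=
  ChainComplex.of (fun k => ModuleCat.of ℤ (ModL b μ k))
    (fun k => ModuleCat.ofHom (dmapL b μ j k))
    (fun k => by
      apply ModuleCat.hom_ext; apply LinearMap.ext; intro p
      show dmapL b μ j k (dmapL b μ j (k+1) p) = 0
      rw [dmapL_apply, dmapL_apply]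
      show ((0 : Fin (b k) → ℤ), j k 0, (0 : Fin (prMu μ k) → ℤ)) = 0
      rw [map_zero]
      rfl)

/-- Build a morphism in `ModuleCat ℤ` from an additive hom of the underlying groups. -/
def addHomToHom (A B : ModuleCat ℤ) (f : ↑A →+ ↑B) : A ⟶ B :=
  ModuleCat.ofHom (@LinearMap.mk _ _ _ _ _ _ _ _ _ A.isModule B.isModule
    { toFun := f, map_add' := f.map_add }
    (fun n x => by
      simp only [AddHom.toFun_eq_coe, AddHom.coe_mk, RingHom.id_apply]
      letI := A.isModule; letI := B.isModule
      have := map_intCast_smul f ℤ ℤ n x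
      exact this))

/-- Build an isomorphism in `ModuleCat ℤ` from an additive equivalence of the
underlying groups. -/
def addEquivToIso (A B : ModuleCat ℤ) (e : ↑A ≃+ ↑B) : A ≅ B where
  hom := addHomToHom A B e.toAddMonoidHom
  inv := addHomToHom B A e.symm.toAddMonoidHom
  hom_inv_id := by
    ext x
    exact e.symm_apply_apply x
  inv_hom_id := by
    ext x
    exact e.apply_symm_apply x


/-- Pitcher's realization: Let `H_0, …, H_n` be finitely generated
abelian groups with `b k = rank H_k` and `μ k` the minimal number of generators of the
torsion subgroup of `H_k` (and `μ_{-1} = 0`, `H_k = 0` for `k > n`).  Then there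
exists a bounded chain complex `(L_*, ∂)` of finitely generated free abelian groups
with `rank L_k = b_k + μ_k + μ_{k-1}` for every `k`, whose homology satisfies
`H_k(L_*) ≅ H_k` for all `k`. -/
theorem stmt_13 (H : ℕ → ModuleCat ℤ) (hfg : ∀ k : ℕ, Module.Finite ℤ (H k))
    (n : ℕ) (hvanish : ∀ k : ℕ, n < k → Limits.IsZero (H k))
    (b μ : ℕ → ℕ)
    (hb : ∀ k : ℕ, b k = Module.finrank ℤ (H k))
    (hμ : ∀ k : ℕ, μ k = torsionMinGen ℤ (H k)) :
    ∃ L : ChainComplex (ModuleCat ℤ) ℕ,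
      (∀ k : ℕ, Module.Free ℤ (L.X k) ∧ Module.Finite ℤ (L.X k)) ∧
      Module.finrank ℤ (L.X 0) = b 0 + μ 0 ∧
      (∀ k : ℕ, Module.finrank ℤ (L.X (k + 1)) = b (k + 1) + μ (k + 1) + μ k) ∧
      (∀ k : ℕ, Nonempty (L.homology k ≅ H k)) := by
  classical
  have key' : ∀ k : ℕ, ∃ (ψ : ((Fin (b k) → ℤ) × (Fin (μ k) → ℤ)) →ₗ[ℤ] (H k))
      (j : (Fin (μ k) → ℤ) →ₗ[ℤ] (Fin (μ k) → ℤ)),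
      Function.Surjective ψ ∧ Function.Injective j ∧
      LinearMap.ker ψ = Submodule.prod ⊥ (LinearMap.range j) := by
    intro k
    haveI := hfg k
    rw [hb k, hμ k]
    exact key (H k)
  choose ψ j hψ hj hker using key'
  refine ⟨LC b μ j, ?_, ?_, ?_, ?_⟩
  · intro k
    exact ⟨inferInstanceAs (Module.Free ℤ (ModL b μ k)),
      inferInstanceAs (Module.Finite ℤ (ModL b μ k))⟩
  · show Module.finrank ℤ (ModL b μ 0) = b 0 + μ 0
    rw [Module.finrank_prod, Module.finrank_prod, Module.finrank_fin_fun,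
      Module.finrank_fin_fun, Module.finrank_fin_fun]
    show b 0 + (μ 0 + 0) = b 0 + μ 0
    omega
  · intro k
    show Module.finrank ℤ (ModL b μ (k+1)) = b (k+1) + μ (k+1) + μ k
    rw [Module.finrank_prod, Module.finrank_prod, Module.finrank_fin_fun,
      Module.finrank_fin_fun, Module.finrank_fin_fun]
    show b (k+1) + (μ (k+1) + μ k) = b (k+1) + μ (k+1) + μ k
    omega
  · intro k
    set L := LC b μ j with hL
    have hprev : (ComplexShape.down ℕ).prev k = k + 1 := ChainComplex.prev ℕ k
    have hnext : (ComplexShape.down ℕ).next k = k - 1 := by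
      cases k with
      | zero => exact ChainComplex.next_nat_zero
      | succ m => exact ChainComplex.next_nat_succ m
    set S := L.sc' (k+1) k (k-1) with hS
    have e1 : L.homology k ≅ S.homology := L.homologyIsoSc' (k+1) k (k-1) hprev hnext
    have e2 : S.homology ≅ S.moduleCatLeftHomologyData.H := S.moduleCatHomologyIso
    have hf : S.f = ModuleCat.ofHom (dmapL b μ j k) := by
      show (LC b μ j).d (k+1) k = _
      exact ChainComplex.of_d (fun k => ModuleCat.of ℤ (ModL b μ k))
        (fun k => ModuleCat.ofHom (dmapL b μ j k)) k
    have hg0 : ∀ p : ModL b μ k, p.2.2 = 0 → S.g p = 0 := by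
      cases k with
      | zero =>
        intro p _
        have hz : S.g = 0 := L.shape 0 (0 - 1) (by simp [ComplexShape.down])
        rw [hz]
        rfl
      | succ m =>
        intro p hp
        have hgd : S.g = ModuleCat.ofHom (dmapL b μ j m) := by
          show (LC b μ j).d (m+1) m = _
          exact ChainComplex.of_d (fun k => ModuleCat.of ℤ (ModL b μ k))
            (fun k => ModuleCat.ofHom (dmapL b μ j k)) m
        rw [hgd]
        show dmapL b μ j m p = 0
        rw [dmapL_apply, hp, map_zero]
        rfl
    have hg1 : ∀ p : ModL b μ k, S.g p = 0 → p.2.2 = 0 := by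
      cases k with
      | zero =>
        intro p _
        funext i
        exact Fin.elim0 i
      | succ m =>
        intro p hp
        have hgd : S.g = ModuleCat.ofHom (dmapL b μ j m) := by
          show (LC b μ j).d (m+1) m = _
          exact ChainComplex.of_d (fun k => ModuleCat.of ℤ (ModL b μ k))
            (fun k => ModuleCat.ofHom (dmapL b μ j k)) m
        rw [hgd] at hp
        have hp' : dmapL b μ j m p = 0 := hp
        have h21 : (j m) p.2.2 = 0 := congrArg (fun r => r.2.1) hp'
        exact hj m (by rw [h21, map_zero])
    let θ : ↥(LinearMap.ker S.g.hom) →ₗ[ℤ] ↥(H k) :=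
      ((ψ k).comp (LinearMap.prod (LinearMap.fst ℤ _ _)
        ((LinearMap.fst ℤ _ _).comp (LinearMap.snd ℤ _ _)))).comp (LinearMap.ker S.g.hom).subtype
    have hθsurj : Function.Surjective θ := by
      intro h
      obtain ⟨⟨x, y⟩, hxy⟩ := hψ k h
      exact ⟨⟨(x, y, 0), LinearMap.mem_ker.mpr (hg0 _ rfl)⟩, hxy⟩
    have hθker : LinearMap.ker θ = LinearMap.range S.moduleCatToCycles := by
      ext q
      obtain ⟨p, hp⟩ := q
      obtain ⟨p1, p2, p3⟩ := p
      simp only [LinearMap.mem_ker, LinearMap.mem_range]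
      constructor
      · intro h0
        have hmem : (p1, p2) ∈ LinearMap.ker (ψ k) := h0
        rw [hker k, Submodule.mem_prod] at hmem
        obtain ⟨z, hz⟩ := hmem.2
        have h1' : p1 = 0 := hmem.1
        have hp3 : p3 = 0 := hg1 _ (LinearMap.mem_ker.mp hp)
        refine ⟨(0, 0, z), ?_⟩
        apply Subtype.ext
        show S.f (0, 0, z) = (p1, p2, p3)
        rw [hf]
        show dmapL b μ j k (0, 0, z) = (p1, p2, p3)
        rw [dmapL_apply]
        rw [h1', hz, hp3]
      · rintro ⟨q0, hq⟩
        have hq' : S.f q0 = (p1, p2, p3) := congrArg Subtype.val hq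
        rw [hf] at hq'
        have hq'' : dmapL b μ j k q0 = (p1, p2, p3) := hq'
        replace hq'' := (dmapL_apply b μ j k q0).symm.trans hq''
        show ψ k (p1, p2) = 0
        rw [← LinearMap.mem_ker, hker k, Submodule.mem_prod]
        refine ⟨?_, ?_⟩
        · show p1 ∈ (⊥ : Submodule ℤ (Fin (b k) → ℤ))
          rw [Submodule.mem_bot]
          exact (congrArg (fun r => r.1) hq'').symm
        · exact ⟨q0.2.2, congrArg (fun r => r.2.1) hq''⟩
    let eq1 : (↥(LinearMap.ker S.g.hom) ⧸ LinearMap.range S.moduleCatToCycles) ≃ₗ[ℤ] ↥(H k) :=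
      (Submodule.quotEquivOfEq (LinearMap.range S.moduleCatToCycles) (LinearMap.ker θ)
        (by exact hθker.symm)).trans (θ.quotKerEquivOfSurjective hθsurj)
    exact ⟨e1 ≪≫ e2 ≪≫ addEquivToIso _ _ eq1.toAddEquiv⟩
end
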